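/- Let Ω be a finite set and G ≤ Sym(Ω) a permutation group with b(G) ≥ 2. Suppose α, β ∈ Ω are distinct, γ ∈ Ω with γ ∉ {α, β}, and E_α, E_β are edges of the Saxl hypergraph Σ(G) with α, γ ∈ E_α and β, γ ∈ E_β. Then there exist edges E'_α, E'_β of Σ(G) with α, γ ∈ E'_α and β, γ ∈ E'_β such that α ∉ E'_α ∩ E'_β, β ∉ E'_α ∩ E'_β, and |E'_α ∩ E'_β| ≤ |E_α ∩ E_β|. In particular, E'_α ≠ E'_β. -/

import Mathlib

/-- `B` is a base for the permutation group `G ≤ Sym(Ω)`: its pointwise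
stabiliser in `G` is trivial. -/
def IsBase {Ω : Type*} (G : Subgroup (Equiv.Perm Ω)) (B : Set Ω) : Prop :=
  ∀ g ∈ G, (∀ b ∈ B, g b = b) → g = 1

/-- The base size `b(G)`: the minimum cardinality of a base for `G`. -/
noncomputable def baseSize {Ω : Type*} (G : Subgroup (Equiv.Perm Ω)) : ℕ :=
  sInf {n | ∃ B : Set Ω, IsBase G B ∧ B.ncard = n}

/-- `E` is an edge of the Saxl hypergraph `Σ(G)`: a base for `G` of size
`b(G)`. -/
def IsSaxlEdge {Ω : Type*} (G : Subgroup (Equiv.Perm Ω)) (E : Set Ω) : Prop :=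
  IsBase G E ∧ E.ncard = baseSize G

/-!
If `x` lies in a Saxl edge `E`, then `E \ {x}` is too small to be a base, so some nontrivial
`g ∈ G` fixes `E \ {x}` pointwise; it must move `x`, and `g '' E = insert (g x) (E \ {x})` is
again a Saxl edge. This exchange removes `x` from `E` while changing the intersection with any
set containing `x` by at most trading `x` for `g x`. Applying it first to `β ∈ E_α`, then to
`α ∈ E_β`, gives the required edges; `γ` survives both exchanges since `γ ∉ {α, β}`.
-/

section SaxlEdge

variable {Ω : Type*} {G : Subgroup (Equiv.Perm Ω)}

theorem baseSize_le_ncard {B : Set Ω} (hB : IsBase G B) : baseSize G ≤ B.ncard :=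
  Nat.sInf_le ⟨B, hB, rfl⟩

theorem IsBase.image {B : Set Ω} (hB : IsBase G B) {g : Equiv.Perm Ω} (hg : g ∈ G) :
    IsBase G (g '' B) := by
  intro h hh hfix
  have hconj : g⁻¹ * h * g = 1 := by
    refine hB _ (mul_mem (mul_mem (inv_mem hg) hh) hg) fun b hb => ?_
    simp [Equiv.Perm.mul_apply, hfix (g b) (Set.mem_image_of_mem g hb)]
  calc h = g * (g⁻¹ * h * g) * g⁻¹ := by group
    _ = 1 := by rw [hconj]; group

theorem IsSaxlEdge.image {E : Set Ω} (hE : IsSaxlEdge G E) {g : Equiv.Perm Ω} (hg : g ∈ G) :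
    IsSaxlEdge G (g '' E) :=
  ⟨hE.1.image hg, (Set.ncard_image_of_injective E g.injective).trans hE.2⟩

theorem IsSaxlEdge.exists_mem_fixing_diff_singleton [Finite Ω] {E : Set Ω} {x : Ω}
    (hE : IsSaxlEdge G E) (hx : x ∈ E) :
    ∃ g ∈ G, (∀ b ∈ E \ {x}, g b = b) ∧ g x ≠ x := by
  have hnot : ¬ IsBase G (E \ {x}) := fun h => by
    have hle := baseSize_le_ncard h
    have hcard := Set.ncard_sdiff_singleton_add_one hx E.toFinite
    have hsize := hE.2
    omega
  simp only [IsBase, not_forall] at hnot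
  obtain ⟨g, hg, hfix, hg1⟩ := hnot
  refine ⟨g, hg, hfix, fun hgx => hg1 (hE.1 g hg fun b hb => ?_)⟩
  obtain rfl | hbx := eq_or_ne b x
  · exact hgx
  · exact hfix b ⟨hb, hbx⟩

theorem IsSaxlEdge.exists_exchange [Finite Ω] {E : Set Ω} {x : Ω}
    (hE : IsSaxlEdge G E) (hx : x ∈ E) :
    ∃ y ≠ x, IsSaxlEdge G (insert y (E \ {x})) := by
  obtain ⟨g, hg, hfix, hgx⟩ := hE.exists_mem_fixing_diff_singleton hx
  have himage : g '' E = insert (g x) (E \ {x}) := by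
    conv_lhs => rw [← Set.insert_sdiff_self_of_mem hx]
    rw [Set.image_insert_eq, Set.image_congr hfix, Set.image_id']
  exact ⟨g x, hgx, himage ▸ hE.image hg⟩

theorem IsSaxlEdge.exists_notMem [Finite Ω] {E F : Set Ω} {x : Ω}
    (hE : IsSaxlEdge G E) (hxF : x ∈ F) :
    ∃ E', IsSaxlEdge G E' ∧ x ∉ E' ∧ E \ {x} ⊆ E' ∧ (E' ∩ F).ncard ≤ (E ∩ F).ncard := by
  by_cases hxE : x ∈ E
  · obtain ⟨y, hyx, hE'⟩ := hE.exists_exchange hxE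
    refine ⟨_, hE', by simp [hyx.symm], Set.subset_insert _ _, ?_⟩
    have hsub : insert y (E \ {x}) ∩ F ⊆ insert y ((E ∩ F) \ {x}) := by
      rintro z ⟨rfl | ⟨hzE, hzx⟩, hzF⟩
      · exact Set.mem_insert _ _
      · exact Set.mem_insert_of_mem _ ⟨⟨hzE, hzF⟩, hzx⟩
    calc (insert y (E \ {x}) ∩ F).ncard ≤ (insert y ((E ∩ F) \ {x})).ncard :=
          Set.ncard_le_ncard hsub
      _ ≤ ((E ∩ F) \ {x}).ncard + 1 := Set.ncard_insert_le _ _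
      _ = (E ∩ F).ncard := Set.ncard_sdiff_singleton_add_one ⟨hxE, hxF⟩ (Set.toFinite _)
  · exact ⟨E, hE, hxE, Set.sdiff_subset, le_rfl⟩

end SaxlEdge

theorem statement_3_general {Ω : Type*} [Fintype Ω] (G : Subgroup (Equiv.Perm Ω))
    (α β γ : Ω) (hαβ : α ≠ β) (hγ : γ ∉ ({α, β} : Set Ω))
    (Eα Eβ : Set Ω) (hEα : IsSaxlEdge G Eα) (hEβ : IsSaxlEdge G Eβ)
    (hα : α ∈ Eα) (hγα : γ ∈ Eα) (hβ : β ∈ Eβ) (hγβ : γ ∈ Eβ) :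
    ∃ Eα' Eβ' : Set Ω, IsSaxlEdge G Eα' ∧ IsSaxlEdge G Eβ' ∧
      α ∈ Eα' ∧ γ ∈ Eα' ∧ β ∈ Eβ' ∧ γ ∈ Eβ' ∧
      α ∉ Eα' ∩ Eβ' ∧ β ∉ Eα' ∩ Eβ' ∧
      (Eα' ∩ Eβ').ncard ≤ (Eα ∩ Eβ).ncard ∧ Eα' ≠ Eβ' := by
  obtain ⟨hγ_ne_α, hγ_ne_β⟩ : γ ≠ α ∧ γ ≠ β := by simpa [not_or] using hγ
  obtain ⟨Eα', hEα', hβEα', hsubα, hcardα⟩ := hEα.exists_notMem (F := Eβ) hβ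
  have hαEα' : α ∈ Eα' := hsubα ⟨hα, hαβ⟩
  obtain ⟨Eβ', hEβ', hαEβ', hsubβ, hcardβ⟩ := hEβ.exists_notMem (F := Eα') hαEα'
  refine ⟨Eα', Eβ', hEα', hEβ', hαEα', hsubα ⟨hγα, hγ_ne_β⟩, hsubβ ⟨hβ, hαβ.symm⟩,
    hsubβ ⟨hγβ, hγ_ne_α⟩, fun h => hαEβ' h.2, fun h => hβEα' h.1, ?_,
    fun h => hαEβ' (h ▸ hαEα')⟩
  calc (Eα' ∩ Eβ').ncard = (Eβ' ∩ Eα').ncard := by rw [Set.inter_comm]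
    _ ≤ (Eβ ∩ Eα').ncard := hcardβ
    _ = (Eα' ∩ Eβ).ncard := by rw [Set.inter_comm]
    _ ≤ (Eα ∩ Eβ).ncard := hcardα

theorem statement_3 {Ω : Type*} [Fintype Ω] (G : Subgroup (Equiv.Perm Ω))
    (hb : 2 ≤ baseSize G) (α β γ : Ω) (hαβ : α ≠ β) (hγ : γ ∉ ({α, β} : Set Ω))
    (Eα Eβ : Set Ω) (hEα : IsSaxlEdge G Eα) (hEβ : IsSaxlEdge G Eβ)
    (hα : α ∈ Eα) (hγα : γ ∈ Eα) (hβ : β ∈ Eβ) (hγβ : γ ∈ Eβ) :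
    ∃ Eα' Eβ' : Set Ω, IsSaxlEdge G Eα' ∧ IsSaxlEdge G Eβ' ∧
      α ∈ Eα' ∧ γ ∈ Eα' ∧ β ∈ Eβ' ∧ γ ∈ Eβ' ∧
      α ∉ Eα' ∩ Eβ' ∧ β ∉ Eα' ∩ Eβ' ∧
      (Eα' ∩ Eβ').ncard ≤ (Eα ∩ Eβ).ncard ∧ Eα' ≠ Eβ' :=
  statement_3_general G α β γ hαβ hγ Eα Eβ hEα hEβ hα hγα hβ hγβ
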